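/- arXiv:1003.4024 — 4 statements merged into one kernel-verified Lean document; each statement's English description precedes it below -/
import Mathlib

section
/- Let X be a completely regular Hausdorff space and ε ∈ (0,1). The set-valued mapping Ψ_ε : P(X) → 2^{C(X)} defined by Ψ_ε(μ) = {K ∈ C(X) : μ(X \ K) < ε} is lower semi-continuous when C(X) carries the Vietoris topology; i.e., for every Vietoris-open U ⊆ C(X), the set {μ ∈ P(X) : Ψ_ε(μ) ∩ U ≠ ∅} is open in P(X). -/
open MeasureTheory Set TopologicalSpace
open scoped ENNReal NNReal

/-- The hyperspace of nonempty compact subsets of `X` (as a plain type). -/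
def NEC (X : Type*) [TopologicalSpace X] : Type _ := {K : Set X // IsCompact K ∧ K.Nonempty}

/-- The upper Vietoris topology on the nonempty compact subsets, generated by the
sets `⟨V⟩ = {S : S ⊆ V}` for `V` open. -/
def upperVietoris (X : Type*) [TopologicalSpace X] : TopologicalSpace (NEC X) :=
  TopologicalSpace.generateFrom
    {s | ∃ V : Set X, IsOpen V ∧ s = {S : NEC X | S.1 ⊆ V}}

/-- The Vietoris topology on the nonempty compact subsets, generated by the subbasic
sets `{S : S ⊆ V}` and `{S : S ∩ V ≠ ∅}` for `V` open. -/
def vietoris (X : Type*) [TopologicalSpace X] : TopologicalSpace (NEC X) :=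
  TopologicalSpace.generateFrom
    ({s | ∃ V : Set X, IsOpen V ∧ s = {S : NEC X | S.1 ⊆ V}} ∪
     {s | ∃ V : Set X, IsOpen V ∧ s = {S : NEC X | (S.1 ∩ V).Nonempty}})

/-- The space of Radon probability measures on `X`: Borel probability measures that are
inner regular with respect to compact sets, topologized as a subspace of the space of
probability measures with the weak topology. -/
def RadonP (X : Type*) [TopologicalSpace X] [MeasurableSpace X] [OpensMeasurableSpace X] :
    Type _ :=
  {μ : ProbabilityMeasure X // (μ : Measure X).InnerRegular}

noncomputable instance {X : Type*} [TopologicalSpace X] [MeasurableSpace X]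
    [OpensMeasurableSpace X] : TopologicalSpace (RadonP X) :=
  instTopologicalSpaceSubtype

/-! If `K ∈ U` and `μ(X \ K) < ε`, Vietoris-openness of `U` yields an open `G ⊇ K` such that
every compact `S` with `K ⊆ S ⊆ G` lies in `U`. A Urysohn function `g` vanishing on `K` and equal
to `1` off `G` gives `ν(X \ G) ≤ ∫ g dν < ε` for all `ν` weakly close to `μ`, since
`∫ g dμ ≤ μ(X \ K)`. Inner regularity of `ν` then provides a compact `C ⊆ G` with
`ν(X \ C) < ε`, and `K ∪ C` is the required compact set for `ν`. -/

open Filter Topology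
open scoped BoundedContinuousFunction

theorem CompletelyRegularSpace.exists_bcf_zero_one_of_isCompact_of_isOpen {X : Type*}
    [TopologicalSpace X] [CompletelyRegularSpace X] {K G : Set X} (hK : IsCompact K)
    (hG : IsOpen G) (hKG : K ⊆ G) :
    ∃ g : X →ᵇ ℝ≥0, (∀ x, g x ≤ 1) ∧ EqOn g 0 K ∧ EqOn g 1 Gᶜ := by
  -- Urysohn's lemma in the compact Hausdorff space `βX`, pulled back along `X → βX`.
  obtain ⟨G', hG', rfl⟩ := isInducing_stoneCechUnit.isOpen_iff.1 hG
  obtain ⟨f, hfK, hfG, hf01⟩ := exists_continuous_zero_one_of_isCompact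
    (hK.image continuous_stoneCechUnit) hG'.isClosed_compl
    (disjoint_compl_right_iff_subset.2 (image_subset_iff.2 hKG))
  refine ⟨(BoundedContinuousFunction.mkOfCompact f).nnrealPart.compContinuous
    ⟨stoneCechUnit, continuous_stoneCechUnit⟩, fun x => ?_, fun x hx => ?_, fun x hx => ?_⟩
  · simpa using (hf01 _).2
  · simp [BoundedContinuousFunction.nnrealPart_coeFn_eq, hfK (mem_image_of_mem _ hx)]
  · simp [BoundedContinuousFunction.nnrealPart_coeFn_eq, hfG hx]

theorem MeasureTheory.ProbabilityMeasure.eventually_measure_compl_lt {X : Type*}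
    [TopologicalSpace X] [CompletelyRegularSpace X] [MeasurableSpace X] [OpensMeasurableSpace X]
    {μ : ProbabilityMeasure X} {K G : Set X} (hK : IsCompact K) (hG : IsOpen G) (hKG : K ⊆ G)
    {ε : ℝ≥0∞} (hμK : (μ : Measure X) Kᶜ < ε) :
    ∀ᶠ ν : ProbabilityMeasure X in 𝓝 μ, (ν : Measure X) Gᶜ < ε := by
  obtain ⟨g, hg1, hgK, hgG⟩ :=
    CompletelyRegularSpace.exists_bcf_zero_one_of_isCompact_of_isOpen hK hG hKG
  have hg_le (ν : Measure X) : ∫⁻ x, g x ∂ν ≤ ν Kᶜ := by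
    refine (lintegral_mono fun x => ?_).trans (lintegral_indicator_one_le Kᶜ)
    by_cases hx : x ∈ K
    · simp [hgK hx, hx]
    · simpa [hx] using hg1 x
  have hg_ge (ν : Measure X) : ν Gᶜ ≤ ∫⁻ x, g x ∂ν := by
    rw [← lintegral_indicator_one hG.isClosed_compl.measurableSet]
    refine lintegral_mono fun x => ?_
    by_cases hx : x ∈ Gᶜ
    · simp [hgG hx, hx]
    · simp [hx]
  filter_upwards [(ProbabilityMeasure.continuous_iff_forall_continuous_lintegral.1
    continuous_id g).continuousAt.eventually (gt_mem_nhds ((hg_le μ).trans_lt hμK))] with ν hν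
  exact (hg_ge ν).trans_lt hν

theorem MeasureTheory.Measure.exists_isCompact_subset_measure_compl_lt {X : Type*}
    [TopologicalSpace X] [R1Space X] [MeasurableSpace X] [BorelSpace X] {μ : Measure X}
    [IsFiniteMeasure μ] [μ.InnerRegularCompactLTTop] {G : Set X} (hG : MeasurableSet G)
    {ε : ℝ≥0∞} (hGε : μ Gᶜ < ε) :
    ∃ C ⊆ G, IsCompact C ∧ μ Cᶜ < ε := by
  obtain ⟨C, hCG, hC, -, hGC⟩ :=
    hG.exists_isCompact_isClosed_sdiff_lt (measure_ne_top μ G) (tsub_pos_of_lt hGε).ne'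
  refine ⟨C, hCG, hC, ?_⟩
  calc μ Cᶜ ≤ μ Gᶜ + μ (G \ C) := by
        refine (measure_mono fun x hxC => ?_).trans (measure_union_le Gᶜ (G \ C))
        by_cases hxG : x ∈ G
        exacts [Or.inr ⟨hxG, hxC⟩, Or.inl hxG]
    _ < ε := lt_tsub_iff_left.1 hGC

theorem exists_isOpen_sandwich_of_isOpen_vietoris {X : Type*} [TopologicalSpace X]
    {U : Set (NEC X)} (hU : IsOpen[vietoris X] U) {K : NEC X} (hK : K ∈ U) :
    ∃ G, IsOpen G ∧ K.1 ⊆ G ∧ ∀ S : NEC X, K.1 ⊆ S.1 → S.1 ⊆ G → S ∈ U := by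
  induction hU generalizing K with
  | basic s hs =>
    rcases hs with ⟨V, hV, rfl⟩ | ⟨V, hV, rfl⟩
    · exact ⟨V, hV, hK, fun S _ hSV => hSV⟩
    · exact ⟨univ, isOpen_univ, subset_univ _,
        fun S hKS _ => hK.mono (inter_subset_inter_left _ hKS)⟩
  | univ => exact ⟨univ, isOpen_univ, subset_univ _, fun _ _ _ => trivial⟩
  | inter s t _ _ ihs iht =>
    obtain ⟨G₁, hG₁, hKG₁, hs⟩ := ihs hK.1
    obtain ⟨G₂, hG₂, hKG₂, ht⟩ := iht hK.2
    exact ⟨G₁ ∩ G₂, hG₁.inter hG₂, subset_inter hKG₁ hKG₂, fun S hKS hSG =>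
      ⟨hs S hKS (hSG.trans inter_subset_left), ht S hKS (hSG.trans inter_subset_right)⟩⟩
  | sUnion F _ ih =>
    obtain ⟨s, hsF, hKs⟩ := hK
    obtain ⟨G, hG, hKG, hs⟩ := ih s hsF hKs
    exact ⟨G, hG, hKG, fun S hKS hSG => ⟨s, hsF, hs S hKS hSG⟩⟩

theorem stmt3_general {X : Type*} [TopologicalSpace X] [CompletelyRegularSpace X]
    [MeasurableSpace X] [BorelSpace X] (ε : ℝ≥0∞)
    (U : Set (NEC X)) (hU : @IsOpen _ (vietoris X) U) :
    IsOpen {μ : RadonP X | ∃ K ∈ U, (μ.1 : Measure X) K.1ᶜ < ε} := by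
  refine isOpen_iff_mem_nhds.2 fun μ ⟨K, hKU, hKε⟩ => ?_
  obtain ⟨G, hG, hKG, hU_sandwich⟩ := exists_isOpen_sandwich_of_isOpen_vietoris hU hKU
  have hGε := ProbabilityMeasure.eventually_measure_compl_lt K.2.1 hG hKG hKε
  filter_upwards [continuous_subtype_val.continuousAt.eventually hGε] with ν hν
  have : (ν.1 : Measure X).InnerRegular := ν.2
  obtain ⟨C, hCG, hC, hCε⟩ := Measure.exists_isCompact_subset_measure_compl_lt hG.measurableSet hν
  exact ⟨⟨K.1 ∪ C, K.2.1.union hC, K.2.2.inl⟩,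
    hU_sandwich _ subset_union_left (union_subset hKG hCG),
    (measure_mono (compl_subset_compl.2 subset_union_right)).trans_lt hCε⟩

theorem stmt3 {X : Type*} [TopologicalSpace X] [CompletelyRegularSpace X] [T2Space X]
    [MeasurableSpace X] [BorelSpace X] (ε : ℝ≥0∞) (h0 : 0 < ε) (h1 : ε < 1)
    (U : Set (NEC X)) (hU : @IsOpen _ (vietoris X) U) :
    IsOpen {μ : RadonP X | ∃ K ∈ U, (μ.1 : Measure X) K.1ᶜ < ε} :=
  stmt3_general ε U hU
end

section
/- Let X be a completely regular Hausdorff space, ε ∈ (0,1), μ a Radon probability measure on X, K a nonempty compact subset of X, and suppose K lies in the closure, with respect to the upper Vietoris topology on C(X), of the set {H ∈ C(X) : μ(X \ H) < ε}. Then μ(X \ K) ≤ ε. -/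
/-! By inner regularity `μ Kᶜ` is the supremum of `μ C` over compact `C ⊆ Kᶜ`. For such `C`,
`⟨Cᶜ⟩` is an upper Vietoris neighbourhood of `K`, hence contains some `H` with `μ Hᶜ < ε`,
and `C ⊆ Hᶜ` gives `μ C < ε`. -/

open MeasureTheory Set TopologicalSpace
open scoped ENNReal NNReal

open scoped Topology

theorem isOpen_upperVietoris_setOf_subset {X : Type*} [TopologicalSpace X] {V : Set X}
    (hV : IsOpen V) : IsOpen[upperVietoris X] {S : NEC X | S.1 ⊆ V} :=
  isOpen_generateFrom_of_mem ⟨V, hV, rfl⟩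

theorem exists_disjoint_of_mem_closure_upperVietoris {X : Type*} [TopologicalSpace X]
    {s : Set (NEC X)} {K : NEC X} (hK : K ∈ closure[upperVietoris X] s) {C : Set X}
    (hC : IsClosed C) (hKC : Disjoint K.1 C) : ∃ H ∈ s, Disjoint H.1 C := by
  obtain ⟨H, hHsub, hHs⟩ := (@mem_closure_iff _ (upperVietoris X) _ _).1 hK _
    (isOpen_upperVietoris_setOf_subset hC.isOpen_compl) hKC.subset_compl_right
  exact ⟨H, hHs, disjoint_compl_left.mono_left hHsub⟩

theorem stmt4_general {X : Type*} [TopologicalSpace X] [T2Space X]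
    [MeasurableSpace X] [BorelSpace X] (μ : Measure X)
    (hμ : μ.InnerRegular) (ε : ℝ≥0∞) (K : NEC X)
    (hK : K ∈ @closure _ (upperVietoris X) {H : NEC X | μ H.1ᶜ < ε}) :
    μ K.1ᶜ ≤ ε := by
  rw [hμ.innerRegular.measure_eq_iSup K.2.1.isClosed.measurableSet.compl]
  refine iSup₂_le fun C hCK => iSup_le fun hC => ?_
  obtain ⟨H, hHε, hHC⟩ :=
    exists_disjoint_of_mem_closure_upperVietoris hK hC.isClosed
      (subset_compl_iff_disjoint_left.1 hCK)
  exact (measure_mono hHC.subset_compl_left).trans hHε.le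

theorem stmt4 {X : Type*} [TopologicalSpace X] [CompletelyRegularSpace X] [T2Space X]
    [MeasurableSpace X] [BorelSpace X] (μ : Measure X) [IsProbabilityMeasure μ]
    (hμ : μ.InnerRegular) (ε : ℝ≥0∞) (h0 : 0 < ε) (h1 : ε < 1) (K : NEC X)
    (hK : K ∈ @closure _ (upperVietoris X) {H : NEC X | μ H.1ᶜ < ε}) :
    μ K.1ᶜ ≤ ε :=
  stmt4_general μ hμ ε K hK
end

section
/- Let X be a completely metrizable space and Z ⊆ P(X) a paracompact subspace of the space of Radon probability measures on X with the weak topology. Then for every ε > 0 there exists an usco mapping φ : Z → C(X) (nonempty compact values, upper semi-continuous) such that μ(X \ φ(μ)) < ε for every μ ∈ Z. -/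
open MeasureTheory Set TopologicalSpace
open scoped ENNReal NNReal

/-!
Fix radii `rₙ → 0` and tolerances `δₙ` with `∑ δₙ < ε`. Each Radon measure gives most of its mass
to a finite union of `rₙ`-balls, and by the portmanteau theorem so do all nearby measures, so
these unions index an open cover of `Z`. A locally finite refinement assigns to each `μ` a finite
union `Dₙ(μ)` of closed `rₙ`-balls with `μ(Dₙ(μ)ᶜ) < δₙ`, and `Dₙ(ν) ⊆ Dₙ(μ)` for `ν` near `μ`.
Then `φ(μ) = ⋂ₙ Dₙ(μ)` is closed and totally bounded, hence compact by completeness, and misses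
mass less than `ε`. Upper semicontinuity comes from a Cantor-type intersection argument: if
`φ(μ) ⊆ U`, then already a finite intersection `⋂_{n ≤ N} Dₙ(μ)` lies in `U`, and this finite
intersection only shrinks near `μ`.
-/

open Filter Topology Metric

section CantorIntersection

variable {X : Type*} [PseudoMetricSpace X]

theorem nonempty_iInter_of_antitone_of_finite_ball_covers [CompleteSpace X] {E : ℕ → Set X}
    (hanti : Antitone E) (hclosed : ∀ n, IsClosed (E n)) (hne : ∀ n, (E n).Nonempty)
    (hnet : ∀ ε > 0, ∃ n, ∃ t : Set X, t.Finite ∧ E n ⊆ ⋃ x ∈ t, ball x ε) :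
    (⋂ n, E n).Nonempty := by
  choose x hx using hne
  -- all terms from the `n`-th on lie in `E n`, hence in finitely many `ε`-balls
  have htb : TotallyBounded (range x) := by
    refine Metric.totallyBounded_iff.2 fun ε hε => ?_
    obtain ⟨n, t, ht, hsub⟩ := hnet ε hε
    refine ⟨t ∪ x '' Iio n, ht.union ((finite_Iio n).image x), ?_⟩
    rintro _ ⟨k, rfl⟩
    rcases lt_or_ge k n with hk | hk
    · exact mem_biUnion (Or.inr (mem_image_of_mem x hk)) (mem_ball_self hε)
    · obtain ⟨y, hy, hxy⟩ := mem_iUnion₂.1 (hsub (hanti hk (hx k)))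
      exact mem_biUnion (Or.inl hy) hxy
  have hK : IsCompact (closure (range x)) := htb.closure.isCompact_of_isClosed isClosed_closure
  obtain ⟨y, hy⟩ := IsCompact.nonempty_iInter_of_sequence_nonempty_isCompact_isClosed
    (fun n => E n ∩ closure (range x)) (fun n => inter_subset_inter_left _ (hanti n.le_succ))
    (fun n => ⟨x n, hx n, subset_closure (mem_range_self n)⟩)
    (hK.of_isClosed_subset ((hclosed 0).inter isClosed_closure) inter_subset_right)
    (fun n => (hclosed n).inter isClosed_closure)
  exact ⟨y, mem_iInter.2 fun n => (mem_iInter.1 hy n).1⟩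

variable {D : ℕ → Set X}

theorem exists_biInter_subset_of_iInter_subset [CompleteSpace X] (hclosed : ∀ n, IsClosed (D n))
    (hnet : ∀ ε > 0, ∃ n, ∃ t : Set X, t.Finite ∧ D n ⊆ ⋃ x ∈ t, ball x ε)
    {U : Set X} (hU : IsOpen U) (hDU : ⋂ n, D n ⊆ U) : ∃ N, ⋂ n ≤ N, D n ⊆ U := by
  by_contra! h
  obtain ⟨y, hy⟩ :=
    nonempty_iInter_of_antitone_of_finite_ball_covers (E := fun N => (⋂ n ≤ N, D n) \ U)
    (fun M N hMN x hx => ⟨mem_iInter₂.2 fun n hn => mem_iInter₂.1 hx.1 n (hn.trans hMN), hx.2⟩)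
    (fun N => (isClosed_biInter fun n _ => hclosed n).sdiff hU)
    (fun N => sdiff_nonempty.2 (h N))
    (fun ε hε => by
      obtain ⟨n, t, ht, hsub⟩ := hnet ε hε
      exact ⟨n, t, ht, fun x hx => hsub (mem_iInter₂.1 hx.1 n le_rfl)⟩)
  have hyD : y ∈ ⋂ n, D n := mem_iInter.2 fun n => mem_iInter₂.1 (mem_iInter.1 hy n).1 n le_rfl
  exact (mem_iInter.1 hy 0).2 (hDU hyD)

theorem totallyBounded_iInter_of_finite_ball_covers
    (hnet : ∀ ε > 0, ∃ n, ∃ t : Set X, t.Finite ∧ D n ⊆ ⋃ x ∈ t, ball x ε) :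
    TotallyBounded (⋂ n, D n) :=
  Metric.totallyBounded_iff.2 fun ε hε =>
    let ⟨n, t, ht, hsub⟩ := hnet ε hε
    ⟨t, ht, (iInter_subset D n).trans hsub⟩

end CantorIntersection

theorem isOpen_setOf_iInter_subset {Z X : Type*} [TopologicalSpace Z] [PseudoMetricSpace X]
    [CompleteSpace X] {D : ℕ → Z → Set X} (hclosed : ∀ n z, IsClosed (D n z))
    (hnet : ∀ z, ∀ ε > 0, ∃ n, ∃ t : Set X, t.Finite ∧ D n z ⊆ ⋃ x ∈ t, ball x ε)
    (hmono : ∀ n z₀, ∀ᶠ z in 𝓝 z₀, D n z ⊆ D n z₀) {U : Set X} (hU : IsOpen U) :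
    IsOpen {z | ⋂ n, D n z ⊆ U} := by
  refine isOpen_iff_mem_nhds.2 fun z₀ hz₀ => ?_
  obtain ⟨N, hN⟩ := exists_biInter_subset_of_iInter_subset (hclosed · z₀) (hnet z₀) hU hz₀
  filter_upwards [(eventually_all_finite (finite_Iic N)).2 fun n _ => hmono n z₀] with z hz
  exact fun x hx => hN (mem_iInter₂.2 fun n hn => hz n hn (mem_iInter.1 hx n))

theorem ParacompactSpace.exists_finite_selection {Z ι : Type*} [TopologicalSpace Z]
    [ParacompactSpace Z] {O : ι → Set Z} (hO : ∀ i, IsOpen (O i)) (hcover : ⋃ i, O i = univ) :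
    ∃ s : Z → Set ι, (∀ z, (s z).Finite) ∧ (∀ z, ∃ i ∈ s z, z ∈ O i) ∧
      ∀ z₀, ∀ᶠ z in 𝓝 z₀, s z ⊆ s z₀ := by
  obtain ⟨V, -, hVcover, hVlf, hVO⟩ := precise_refinement O hO hcover
  refine ⟨fun z => {i | z ∈ closure (V i)}, fun z => hVlf.closure.point_finite z, fun z => ?_,
    hVlf.closure.eventually_subset fun _ => isClosed_closure⟩
  obtain ⟨i, hi⟩ := mem_iUnion.1 (hVcover ▸ mem_univ z : z ∈ ⋃ i, V i)
  exact ⟨i, subset_closure hi, hVO i hi⟩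

theorem ProbabilityMeasure.isOpen_setOf_apply_lt {Ω : Type*} [MeasurableSpace Ω]
    [TopologicalSpace Ω] [OpensMeasurableSpace Ω] [HasOuterApproxClosed Ω] {F : Set Ω}
    (hF : IsClosed F) (c : ℝ≥0∞) : IsOpen {ν : ProbabilityMeasure Ω | (ν : Measure Ω) F < c} :=
  isOpen_iff_mem_nhds.2 fun _ hν => eventually_lt_of_limsup_lt
    ((ProbabilityMeasure.limsup_measure_closed_le_of_tendsto tendsto_id hF).trans_lt hν)

theorem exists_finite_measure_compl_iUnion_ball_lt {X : Type*} [MetricSpace X] [MeasurableSpace X]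
    [OpensMeasurableSpace X] (μ : Measure X) [IsFiniteMeasure μ] [μ.InnerRegularCompactLTTop]
    {δ : ℝ≥0∞} (hδ : δ ≠ 0) {r : ℝ} (hr : 0 < r) :
    ∃ t : Set X, t.Finite ∧ μ (⋃ x ∈ t, ball x r)ᶜ < δ := by
  obtain ⟨K, -, hK, hμK⟩ := MeasurableSet.univ.exists_isCompact_sdiff_lt (μ := μ)
    (measure_ne_top μ univ) hδ
  obtain ⟨t, -, ht, hKt⟩ := finite_cover_balls_of_compact hK hr
  have hcompl : (⋃ x ∈ t, ball x r)ᶜ ⊆ univ \ K :=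
    fun x hx => ⟨mem_univ x, fun hxK => hx (hKt hxK)⟩
  exact ⟨t, ht, (measure_mono hcompl).trans_lt hμK⟩

theorem exists_locally_decreasing_closedBall_approx {Z X : Type*} [TopologicalSpace Z]
    [ParacompactSpace Z] [MetricSpace X] [MeasurableSpace X] [OpensMeasurableSpace X]
    {μ : Z → ProbabilityMeasure X} (hμ : Continuous μ) (hreg : ∀ z, (μ z : Measure X).InnerRegular)
    {r : ℝ} (hr : 0 < r) {δ : ℝ≥0∞} (hδ : δ ≠ 0) :
    ∃ D : Z → Set X, (∀ z, IsClosed (D z)) ∧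
      (∀ z, ∃ t : Set X, t.Finite ∧ D z ⊆ ⋃ x ∈ t, closedBall x r) ∧
      (∀ z, (μ z : Measure X) (D z)ᶜ < δ) ∧ ∀ z₀, ∀ᶠ z in 𝓝 z₀, D z ⊆ D z₀ := by
  choose t ht hμt using fun z =>
    haveI := hreg z
    exists_finite_measure_compl_iUnion_ball_lt (μ z : Measure X) hδ hr
  have hO : ∀ i, IsOpen {z | (μ z : Measure X) (⋃ x ∈ t i, ball x r)ᶜ < δ} := fun i =>
    (ProbabilityMeasure.isOpen_setOf_apply_lt
      (isOpen_biUnion fun x _ => isOpen_ball).isClosed_compl δ).preimage hμ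
  obtain ⟨s, hsfin, hsO, hsmono⟩ := ParacompactSpace.exists_finite_selection hO
    (eq_univ_of_forall fun z => mem_iUnion.2 ⟨z, hμt z⟩)
  refine ⟨fun z => ⋃ i ∈ s z, ⋃ x ∈ t i, closedBall x r, fun z => ?_, fun z => ?_, fun z => ?_,
    fun z₀ => (hsmono z₀).mono fun z hz => biUnion_subset_biUnion_left hz⟩
  · exact (hsfin z).isClosed_biUnion fun i _ =>
      (ht i).isClosed_biUnion fun x _ => isClosed_closedBall
  · refine ⟨⋃ i ∈ s z, t i, (hsfin z).biUnion fun i _ => ht i, fun y hy => ?_⟩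
    obtain ⟨i, hi, x, hx, hyx⟩ := by simpa only [mem_iUnion, exists_prop] using hy
    exact mem_biUnion (mem_biUnion hi hx) hyx
  · obtain ⟨i, hi, hzi⟩ := hsO z
    refine (measure_mono (compl_subset_compl.2 ?_)).trans_lt hzi
    exact (iUnion₂_mono fun x _ => ball_subset_closedBall).trans
      (subset_biUnion_of_mem (u := fun i => ⋃ x ∈ t i, closedBall x r) hi)

theorem stmt8 {X : Type*} [MetricSpace X] [CompleteSpace X] [MeasurableSpace X]
    [BorelSpace X] (Z : Set (RadonP X)) (hZ : ParacompactSpace Z)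
    (ε : ℝ≥0∞) (hε : 0 < ε) :
    ∃ φ : Z → NEC X, (∀ U : Set X, IsOpen U → IsOpen {μ : Z | (φ μ).1 ⊆ U}) ∧
      ∀ μ : Z, ((μ : RadonP X).1 : Measure X) (φ μ).1ᶜ < ε := by
  -- capping the missed mass below `1` makes every `φ μ` nonempty
  obtain ⟨δ, hδ, hδsum⟩ := ENNReal.exists_pos_sum_of_countable (lt_min hε one_pos).ne' ℕ
  choose D hDclosed hDnet hDμ hDmono using fun n : ℕ =>
    exists_locally_decreasing_closedBall_approx (μ := fun z : Z => (z : RadonP X).1)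
      (by fun_prop) (fun z => (z : RadonP X).2)
      Nat.one_div_pos_of_nat (ENNReal.coe_ne_zero.2 (hδ n).ne')
  have hnet : ∀ z, ∀ ε > 0, ∃ n, ∃ t : Set X, t.Finite ∧ D n z ⊆ ⋃ x ∈ t, ball x ε := by
    intro z ε hε
    obtain ⟨n, hn⟩ := exists_nat_one_div_lt hε
    obtain ⟨t, ht, hsub⟩ := hDnet n z
    exact ⟨n, t, ht, hsub.trans (iUnion₂_mono fun x _ => closedBall_subset_ball hn)⟩
  have hcompl : ∀ z : Z, ((z : RadonP X).1 : Measure X) (⋂ n, D n z)ᶜ < min ε 1 := fun z =>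
    calc _ = ((z : RadonP X).1 : Measure X) (⋃ n, (D n z)ᶜ) := by rw [compl_iInter]
      _ ≤ ∑' n, ((z : RadonP X).1 : Measure X) (D n z)ᶜ := measure_iUnion_le _
      _ ≤ ∑' n, (δ n : ℝ≥0∞) := ENNReal.tsum_le_tsum fun n => (hDμ n z).le
      _ < min ε 1 := hδsum
  have hne : ∀ z, (⋂ n, D n z).Nonempty := fun z => nonempty_iff_ne_empty.2 fun h => by
    simpa [h] using hcompl z
  refine ⟨fun z => ⟨⋂ n, D n z, ?_, hne z⟩, fun U hU => isOpen_setOf_iInter_subset hDclosed hnet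
    hDmono hU, fun z => (hcompl z).trans_le (min_le_left _ _)⟩
  exact (totallyBounded_iInter_of_finite_ball_covers (hnet z)).isCompact_of_isClosed
    (isClosed_iInter fun n => hDclosed n z)
end

section
/- Let X be a Polish space, ε ∈ (0,1), and let Z ⊆ P(X) be any subset of the space of Borel probability measures with the weak topology. Then there exists an usco mapping φ : Z → C(X) with μ(X \ φ(μ)) < ε for all μ ∈ Z; in particular, for every compact T ⊆ Z the set ⋃{φ(μ) : μ ∈ T} is a compact subset K of X satisfying μ(X \ K) < ε for all μ ∈ T. -/
open MeasureTheory Set TopologicalSpace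
open scoped ENNReal NNReal

/-!
Fix a dense sequence `x` in `X` and weights `δ n > 0` with `∑ δ n < ε`. For a measure `μ` and a
scale `1 / (n + 1)`, let `m(μ, n)` be the least `m` such that the balls of that radius around
`x 0, …, x (m - 1)` carry all but `δ n` of the mass of `μ`, and let `K μ` be the intersection
over `n` of the closures of these unions. Then `K μ` is closed and totally bounded, hence
compact, and misses mass at most `∑ δ n < ε`. By the portmanteau theorem `m(·, n)` is locally
bounded by `m(μ₀, n)`, and in a complete space a finite stage of the intersection defining
`K μ₀` already lies in any open `U ⊇ K μ₀`; so `K` is upper semicontinuous, and the union of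
its values over a compact set of measures is compact.
-/

open Metric Filter
open scoped Topology

theorem IsCompact.biUnion_of_isOpen_setOf_subset {Z X : Type*} [TopologicalSpace Z]
    [TopologicalSpace X] {φ : Z → Set X} (hφ : ∀ U, IsOpen U → IsOpen {z | φ z ⊆ U})
    {T : Set Z} (hT : IsCompact T) (hφT : ∀ z ∈ T, IsCompact (φ z)) :
    IsCompact (⋃ z ∈ T, φ z) := by
  rw [isCompact_iff_finite_subcover]
  intro ι U hU hcover
  rw [iUnion₂_subset_iff] at hcover
  obtain ⟨s, hs⟩ := hT.elim_finite_subcover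
    (fun s : Finset ι => {z | φ z ⊆ ⋃ i ∈ s, U i})
    (fun s => hφ _ (isOpen_biUnion fun _ _ => hU _))
    (fun z hz => mem_iUnion.2 <| (hφT z hz).elim_finite_subcover U hU (hcover z hz))
  classical
  refine ⟨s.biUnion id, iUnion₂_subset fun z hz => ?_⟩
  obtain ⟨t, hts, hzt⟩ := mem_iUnion₂.1 (hs hz)
  exact hzt.trans (biUnion_subset_biUnion_left fun i hi => Finset.mem_biUnion.2 ⟨t, hts, hi⟩)

theorem ProbabilityMeasure.isOpen_setOf_measure_lt {Ω : Type*} [TopologicalSpace Ω]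
    [MeasurableSpace Ω] [OpensMeasurableSpace Ω] [HasOuterApproxClosed Ω] {F : Set Ω}
    (hF : IsClosed F) (c : ℝ≥0∞) :
    IsOpen {μ : ProbabilityMeasure Ω | (μ : Measure Ω) F < c} :=
  isOpen_iff_mem_nhds.2 fun _ hμ => eventually_lt_of_limsup_lt <|
    (ProbabilityMeasure.limsup_measure_closed_le_of_tendsto tendsto_id hF).trans_lt hμ

theorem exists_biInter_subset_of_forall_finite_ball_cover {X : Type*} [PseudoMetricSpace X]
    [CompleteSpace X] {F : ℕ → Set X} (hF : ∀ n, IsClosed (F n))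
    (hnet : ∀ r > 0, ∃ n, ∃ t : Set X, t.Finite ∧ F n ⊆ ⋃ y ∈ t, ball y r)
    {U : Set X} (hU : IsOpen U) (hFU : ⋂ n, F n ⊆ U) : ∃ N, ⋂ n < N, F n ⊆ U := by
  by_contra! h
  choose y hyF hyU using fun N => not_subset.1 (h N)
  set 𝒰 : Ultrafilter X := Ultrafilter.of (map y atTop)
  have mem_𝒰 : ∀ s, (∀ᶠ N in atTop, y N ∈ s) → s ∈ 𝒰 := fun s hs => Ultrafilter.of_le _ hs
  have hF𝒰 : ∀ n, F n ∈ 𝒰 := fun n => mem_𝒰 _ <|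
    eventually_atTop.2 ⟨n + 1, fun N hN => mem_iInter₂.1 (hyF N) n hN⟩
  have hcauchy : Cauchy (𝒰 : Filter X) := by
    refine Metric.cauchy_iff.2 ⟨inferInstance, fun r hr => ?_⟩
    obtain ⟨n, t, ht, hFt⟩ := hnet (r / 2) (half_pos hr)
    obtain ⟨c, -, hc⟩ := (Ultrafilter.finite_biUnion_mem_iff ht).1 (mem_of_superset (hF𝒰 n) hFt)
    refine ⟨_, hc, fun a ha b hb => ?_⟩
    linarith [dist_triangle_right a b c, mem_ball.1 ha, mem_ball.1 hb]
  obtain ⟨z, hz⟩ := CompleteSpace.complete hcauchy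
  have mem_of_closed : ∀ s ∈ 𝒰, IsClosed s → z ∈ s := fun s hs hsc =>
    hsc.mem_of_tendsto (tendsto_id'.2 hz) hs
  have hzU : z ∈ Uᶜ := mem_of_closed _ (mem_𝒰 _ (.of_forall hyU)) hU.isClosed_compl
  exact hzU (hFU (mem_iInter.2 fun n => mem_of_closed _ (hF𝒰 n) (hF n)))

theorem isCompact_iInter_of_forall_finite_ball_cover {X : Type*} [PseudoMetricSpace X]
    [CompleteSpace X] {F : ℕ → Set X} (hF : ∀ n, IsClosed (F n))
    (hnet : ∀ r > 0, ∃ n, ∃ t : Set X, t.Finite ∧ F n ⊆ ⋃ y ∈ t, ball y r) :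
    IsCompact (⋂ n, F n) := by
  refine TotallyBounded.isCompact_of_isClosed (Metric.totallyBounded_iff.2 fun r hr => ?_)
    (isClosed_iInter hF)
  obtain ⟨n, t, ht, hFt⟩ := hnet r hr
  exact ⟨t, ht, (iInter_subset _ n).trans hFt⟩

section CoverCore

variable {X : Type*} [MeasurableSpace X]

noncomputable def coverIndex (G : ℕ → ℕ → Set X) (δ : ℕ → ℝ≥0∞) (μ : Measure X) (n : ℕ) : ℕ :=
  sInf {m | μ (G n m)ᶜ < δ n}

theorem measure_compl_coverIndex_lt {G : ℕ → ℕ → Set X} {δ : ℕ → ℝ≥0∞}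
    (hG : ∀ n m, MeasurableSet (G n m)) (hmono : ∀ n, Monotone (G n))
    (hcover : ∀ n, ⋃ m, G n m = univ) (hδ : ∀ n, 0 < δ n)
    (μ : Measure X) [IsFiniteMeasure μ] (n : ℕ) :
    μ (G n (coverIndex G δ μ n))ᶜ < δ n := by
  refine Nat.sInf_mem (s := {m | μ (G n m)ᶜ < δ n}) ?_
  have hlim : Tendsto (fun m => μ (G n m)ᶜ) atTop (𝓝 0) := by
    have := tendsto_measure_iInter_atTop (μ := μ) (fun m => (hG n m).compl.nullMeasurableSet)
      (fun _ _ h => compl_subset_compl.2 (hmono n h)) ⟨0, measure_ne_top μ _⟩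
    rwa [← compl_iUnion, hcover, compl_univ, measure_empty] at this
  exact (hlim.eventually_lt_const (hδ n)).exists

noncomputable def coverCore [TopologicalSpace X] (G : ℕ → ℕ → Set X) (δ : ℕ → ℝ≥0∞)
    (μ : Measure X) : Set X :=
  ⋂ n, closure (G n (coverIndex G δ μ n))

variable [TopologicalSpace X] {G : ℕ → ℕ → Set X} {δ : ℕ → ℝ≥0∞}

theorem measure_compl_coverCore_le (hG : ∀ n m, MeasurableSet (G n m))
    (hmono : ∀ n, Monotone (G n)) (hcover : ∀ n, ⋃ m, G n m = univ) (hδ : ∀ n, 0 < δ n)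
    (μ : Measure X) [IsFiniteMeasure μ] :
    μ (coverCore G δ μ)ᶜ ≤ ∑' n, δ n :=
  calc μ (coverCore G δ μ)ᶜ = μ (⋃ n, (closure (G n (coverIndex G δ μ n)))ᶜ) := by
        rw [coverCore, compl_iInter]
    _ ≤ ∑' n, μ (closure (G n (coverIndex G δ μ n)))ᶜ := measure_iUnion_le _
    _ ≤ ∑' n, δ n := ENNReal.tsum_le_tsum fun n =>
        (measure_mono (compl_subset_compl.2 subset_closure)).trans
          (measure_compl_coverIndex_lt hG hmono hcover hδ μ n).le

variable [OpensMeasurableSpace X] [HasOuterApproxClosed X]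

/-- By the portmanteau theorem `μ (G n m)ᶜ < δ n` is an open condition on `μ`, so nearby
measures have no larger `coverIndex`. -/
theorem eventually_coverCore_subset (hG : ∀ n m, IsOpen (G n m))
    (hmono : ∀ n, Monotone (G n)) (hcover : ∀ n, ⋃ m, G n m = univ) (hδ : ∀ n, 0 < δ n)
    (μ₀ : ProbabilityMeasure X) (N : ℕ) :
    ∀ᶠ μ : ProbabilityMeasure X in 𝓝 μ₀,
      coverCore G δ μ ⊆ ⋂ n < N, closure (G n (coverIndex G δ μ₀ n)) := by
  have hindex : ∀ n, ∀ᶠ μ : ProbabilityMeasure X in 𝓝 μ₀,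
      coverIndex G δ μ n ≤ coverIndex G δ μ₀ n := fun n =>
    mem_of_superset
      ((ProbabilityMeasure.isOpen_setOf_measure_lt (hG n _).isClosed_compl (δ n)).mem_nhds
        (measure_compl_coverIndex_lt (fun n m => (hG n m).measurableSet) hmono hcover hδ _ n))
      fun _ hμ => Nat.sInf_le hμ
  filter_upwards [(eventually_all_finite (finite_Iio N)).2 fun n _ => hindex n] with μ hμ
  exact subset_iInter₂ fun n hn => (iInter_subset _ n).trans (closure_mono (hmono n (hμ n hn)))

end CoverCore

section BallCover

variable {X : Type*} [PseudoMetricSpace X]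

def ballCover (x : ℕ → X) (n m : ℕ) : Set X :=
  ⋃ i ∈ Iio m, ball (x i) (1 / (n + 1))

variable {x : ℕ → X}

theorem isOpen_ballCover (n m : ℕ) : IsOpen (ballCover x n m) :=
  isOpen_biUnion fun _ _ => isOpen_ball

theorem monotone_ballCover (n : ℕ) : Monotone (ballCover x n) := fun _ _ h =>
  biUnion_subset_biUnion_left (Iio_subset_Iio h)

theorem iUnion_ballCover (hx : DenseRange x) (n : ℕ) : ⋃ m, ballCover x n m = univ := by
  refine eq_univ_of_forall fun y => ?_
  obtain ⟨i, hi⟩ := Metric.denseRange_iff.1 hx y _ (Nat.one_div_pos_of_nat (n := n))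
  exact mem_iUnion.2 ⟨i + 1, mem_biUnion (Nat.lt_succ_self i) hi⟩

theorem closure_ballCover_subset {n : ℕ} {r : ℝ} (hr : 1 / (n + 1 : ℝ) < r) (m : ℕ) :
    closure (ballCover x n m) ⊆ ⋃ y ∈ x '' Iio m, ball y r :=
  calc closure (ballCover x n m) ⊆ ⋃ i ∈ Iio m, closedBall (x i) (1 / (n + 1)) :=
        closure_minimal (iUnion₂_mono fun _ _ => ball_subset_closedBall)
          ((finite_Iio m).isClosed_biUnion fun _ _ => isClosed_closedBall)
    _ ⊆ ⋃ y ∈ x '' Iio m, ball y r := by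
        rw [biUnion_image]
        exact iUnion₂_mono fun _ _ => closedBall_subset_ball hr

theorem forall_finite_ball_cover_closure_ballCover (m : ℕ → ℕ) :
    ∀ r > 0, ∃ n, ∃ t : Set X, t.Finite ∧ closure (ballCover x n (m n)) ⊆ ⋃ y ∈ t, ball y r :=
  fun _ hr =>
    let ⟨n, hn⟩ := exists_nat_one_div_lt hr
    ⟨n, _, (finite_Iio _).image x, closure_ballCover_subset hn _⟩

end BallCover

section CompleteSeparable

variable {X : Type*} [PseudoMetricSpace X] [CompleteSpace X] [MeasurableSpace X]
  {x : ℕ → X} {δ : ℕ → ℝ≥0∞}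

theorem isCompact_coverCore_ballCover (μ : Measure X) :
    IsCompact (coverCore (ballCover x) δ μ) :=
  isCompact_iInter_of_forall_finite_ball_cover (fun _ => isClosed_closure)
    (forall_finite_ball_cover_closure_ballCover _)

variable [OpensMeasurableSpace X]

theorem isOpen_setOf_coverCore_ballCover_subset (hx : DenseRange x) (hδ : ∀ n, 0 < δ n)
    {U : Set X} (hU : IsOpen U) :
    IsOpen {μ : ProbabilityMeasure X | coverCore (ballCover x) δ μ ⊆ U} := by
  refine isOpen_iff_mem_nhds.2 fun μ₀ hμ₀ => ?_
  obtain ⟨N, hN⟩ := exists_biInter_subset_of_forall_finite_ball_cover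
    (fun _ => isClosed_closure) (forall_finite_ball_cover_closure_ballCover _) hU hμ₀
  filter_upwards [eventually_coverCore_subset isOpen_ballCover monotone_ballCover
    (iUnion_ballCover hx) hδ μ₀ N] with μ hμ using hμ.trans hN

variable [SeparableSpace X]

theorem ProbabilityMeasure.exists_usc_isCompact_measure_compl_lt {ε : ℝ≥0∞} (hε : ε ≠ 0) :
    ∃ K : ProbabilityMeasure X → Set X,
      (∀ U, IsOpen U → IsOpen {μ | K μ ⊆ U}) ∧ (∀ μ, IsCompact (K μ)) ∧
        ∀ μ : ProbabilityMeasure X, (μ : Measure X) (K μ)ᶜ < ε := by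
  rcases isEmpty_or_nonempty X with hX | hX
  · refine ⟨fun _ => ∅, fun U _ => by simp only [empty_subset, ofPred_true, isOpen_univ],
      fun _ => isCompact_empty, fun μ => ?_⟩
    rw [compl_empty, univ_eq_empty_iff.2 hX, measure_empty]
    exact pos_iff_ne_zero.2 hε
  obtain ⟨x, hx⟩ := exists_dense_seq X
  obtain ⟨δ, hδ, hδε⟩ := ENNReal.exists_pos_sum_of_countable' hε ℕ
  refine ⟨fun μ => coverCore (ballCover x) δ μ, fun U hU => ?_, fun μ => ?_, fun μ => ?_⟩
  · exact isOpen_setOf_coverCore_ballCover_subset hx hδ hU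
  · exact isCompact_coverCore_ballCover _
  · exact (measure_compl_coverCore_le (fun n m => (isOpen_ballCover n m).measurableSet)
      monotone_ballCover (iUnion_ballCover hx) hδ μ).trans_lt hδε

end CompleteSeparable

theorem stmt18 {X : Type*} [TopologicalSpace X] [PolishSpace X] [MeasurableSpace X]
    [BorelSpace X] (ε : ℝ≥0∞) (h0 : 0 < ε) (h1 : ε < 1)
    (Z : Set (ProbabilityMeasure X)) :
    ∃ φ : Z → NEC X,
      (∀ U : Set X, IsOpen U → IsOpen {μ : Z | (φ μ).1 ⊆ U}) ∧
      (∀ μ : Z, ((μ : ProbabilityMeasure X) : Measure X) (φ μ).1ᶜ < ε) ∧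
      ∀ T : Set Z, IsCompact T →
        IsCompact (⋃ μ ∈ T, (φ μ).1) ∧
          ∀ μ ∈ T, ((μ : ProbabilityMeasure X) : Measure X) (⋃ ν ∈ T, (φ ν).1)ᶜ < ε := by
  let := upgradeIsCompletelyMetrizable X
  obtain ⟨K, hKusc, hKcpt, hKε⟩ :=
    ProbabilityMeasure.exists_usc_isCompact_measure_compl_lt (X := X) h0.ne'
  have hKne : ∀ μ, (K μ).Nonempty := fun μ => nonempty_iff_ne_empty.2 fun h => by
    simpa [h] using (hKε μ).trans h1
  have husc : ∀ U, IsOpen U → IsOpen {μ : Z | K μ ⊆ U} := fun U hU =>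
    (hKusc U hU).preimage continuous_subtype_val
  refine ⟨fun μ => ⟨K μ, hKcpt μ, hKne μ⟩, husc, fun μ => hKε μ, fun T hT =>
    ⟨hT.biUnion_of_isOpen_setOf_subset husc fun μ _ => hKcpt μ, fun μ hμ => ?_⟩⟩
  exact (measure_mono (compl_subset_compl.2 (subset_biUnion_of_mem hμ))).trans_lt (hKε μ)
end
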